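/- Let f* be an optimal randomized prediction rule for the DDP-constrained fair classification problem: f* satisfies DDP(Ŷ, S) ≤ ε and its risk E[1{Ŷ ≠ Y}] is minimal among all randomized prediction rules Q_{Ŷ|X,S} satisfying DDP(Ŷ, S) ≤ ε. Suppose Y = h(X, S) for a deterministic function h : 𝒳 × 𝒮 → 𝒴, and the majority sensitive attribute s_max ∈ 𝒮 satisfies P_S(s_max) = 1/2 + δ for some δ > 0. Then for the prediction variable Ŷ induced by f*, for every s ∈ 𝒮: TV(P_{Ŷ|S=s}, P_{Y|S=s_max}) ≤ (1/2 + 1/(4δ)) · ε. -/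

import Mathlib

open Finset

noncomputable section

variable {𝒳 𝒴 𝒮 : Type*} [Fintype 𝒳] [Fintype 𝒴] [Fintype 𝒮] [DecidableEq 𝒴]

/-- Total variation distance between two finitely supported distributions on `𝒴`,
`TV(p, q) = (1/2) ∑ y, |p y - q y|`. -/
def TV (p q : 𝒴 → ℝ) : ℝ := (1 / 2) * ∑ y, |p y - q y|

/-- Marginal distribution of the sensitive attribute `S` under the joint `P` of `(X, Y, S)`. -/
def margS (P : 𝒳 → 𝒴 → 𝒮 → ℝ) (s : 𝒮) : ℝ := ∑ x, ∑ y, P x y s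

/-- Conditional distribution of the label `Y` given `S = s`. -/
def condYS (P : 𝒳 → 𝒴 → 𝒮 → ℝ) (s : 𝒮) (y : 𝒴) : ℝ := (∑ x, P x y s) / margS P s

/-- A randomized prediction rule `Q`: for every `(x, s)`, `Q x s` is a probability
distribution on labels. -/
def IsRule (Q : 𝒳 → 𝒮 → 𝒴 → ℝ) : Prop :=
  (∀ x s y, 0 ≤ Q x s y) ∧ ∀ x s, ∑ y, Q x s y = 1

/-- The risk `E[1{Ŷ ≠ Y}]` of the rule `Q` under the joint distribution induced by `P` and
`Q` (in which `Ŷ` is conditionally independent of `Y` given `(X, S)`). -/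
def risk (P : 𝒳 → 𝒴 → 𝒮 → ℝ) (Q : 𝒳 → 𝒮 → 𝒴 → ℝ) : ℝ :=
  ∑ x, ∑ y, ∑ s, ∑ yh, P x y s * Q x s yh * (if yh = y then (0 : ℝ) else 1)

/-- Joint distribution of `(Ŷ, S)` induced by `P` and the rule `Q`. -/
def jointYhatS (P : 𝒳 → 𝒴 → 𝒮 → ℝ) (Q : 𝒳 → 𝒮 → 𝒴 → ℝ) (yh : 𝒴) (s : 𝒮) : ℝ :=
  ∑ x, ∑ y, P x y s * Q x s yh

/-- Marginal distribution of the prediction `Ŷ`. -/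
def margYhat (P : 𝒳 → 𝒴 → 𝒮 → ℝ) (Q : 𝒳 → 𝒮 → 𝒴 → ℝ) (yh : 𝒴) : ℝ :=
  ∑ s, jointYhatS P Q yh s

/-- Conditional distribution of the prediction `Ŷ` given `S = s`. -/
def condYhatS (P : 𝒳 → 𝒴 → 𝒮 → ℝ) (Q : 𝒳 → 𝒮 → 𝒴 → ℝ) (s : 𝒮) (yh : 𝒴) : ℝ :=
  jointYhatS P Q yh s / margS P s

/-- Difference of demographic parity of the prediction `Ŷ` induced by rule `Q`:
`DDP(Ŷ, S) = ∑_{y, s} |P(Ŷ=y | S=s) - P(Ŷ=y)|`. -/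
def DDP (P : 𝒳 → 𝒴 → 𝒮 → ℝ) (Q : 𝒳 → 𝒮 → 𝒴 → ℝ) : ℝ :=
  ∑ yh, ∑ s, |condYhatS P Q s yh - margYhat P Q yh|

/-!
Write `q = P_{Y|S=smax}` and `ν = P_Ŷ`. Since `Y = h(X, S)`, a rule may act on the label itself:
moving each `P_{Y|S=s}` to `q` along a maximal coupling gives a rule with `DDP = 0` and risk at
most `∑ₛ P_S(s) TV(P_{Y|S=s}, q)`. Any rule has risk at least
`∑ₛ P_S(s) TV(P_{Y|S=s}, P_{Ŷ|S=s}) ≥ ∑ₛ P_S(s) TV(P_{Y|S=s}, ν) - DDP/2`, and because `smax`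
carries weight `1/2 + δ`, the triangle inequality through `ν` improves the comparison to
`∑ₛ P_S(s) TV(P_{Y|S=s}, ν) ≥ ∑ₛ P_S(s) TV(P_{Y|S=s}, q) + 2δ TV(q, ν)`. Optimality of `Q`
therefore forces `TV(q, ν) ≤ ε/(4δ)`, while `TV(P_{Ŷ|S=s}, ν) ≤ DDP/2 ≤ ε/2`.
-/

section TotalVariation

variable {α : Type*} [Fintype α]

lemma TV_nonneg (p q : α → ℝ) : 0 ≤ TV p q :=
  mul_nonneg (by norm_num) (sum_nonneg fun _ _ => abs_nonneg _)

lemma TV_comm (p q : α → ℝ) : TV p q = TV q p := by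
  simp only [TV, abs_sub_comm]

lemma TV_self (p : α → ℝ) : TV p p = 0 := by
  simp [TV]

lemma TV_triangle (p q r : α → ℝ) : TV p r ≤ TV p q + TV q r := by
  simp only [TV, ← mul_add, ← sum_add_distrib]
  gcongr with y
  exact abs_sub_le _ _ _

lemma TV_eq_zero_iff {p q : α → ℝ} : TV p q = 0 ↔ p = q := by
  simp [TV, sum_eq_zero_iff_of_nonneg, sub_eq_zero, funext_iff]

lemma sum_min_eq_one_sub_TV {p q : α → ℝ} (hp : ∑ y, p y = 1) (hq : ∑ y, q y = 1) :
    ∑ y, min (p y) (q y) = 1 - TV p q := by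
  have h : ∀ y, 2 * min (p y) (q y) = p y + q y - |p y - q y| := fun y => by
    rw [abs_sub_comm, ← max_sub_min_eq_abs, ← min_add_max]; ring
  have hsum : 2 * ∑ y, min (p y) (q y) = ∑ y, p y + ∑ y, q y - ∑ y, |p y - q y| := by
    rw [mul_sum, ← sum_add_distrib, ← sum_sub_distrib]
    exact sum_congr rfl fun y _ => h y
  rw [TV]
  linarith

end TotalVariation

section Coupling

variable {α : Type*} [Fintype α] [DecidableEq α]

lemma mul_min_one_div {a b : ℝ} (ha : 0 ≤ a) (hb : 0 ≤ b) : a * min 1 (b / a) = min a b := by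
  rcases ha.eq_or_lt with rfl | ha
  · simp [hb]
  · rw [mul_min_of_nonneg _ _ ha.le, mul_one, mul_div_cancel₀ _ ha.ne']

/-- Keep `min (a c) (q c)` of the mass at `c` in place and spread the excess `a - min a q`
over the deficit `q - min a q`; both have total mass `TV a q`. -/
theorem exists_maximal_coupling_kernel {a q : α → ℝ} (ha0 : ∀ y, 0 ≤ a y) (ha1 : ∑ y, a y = 1)
    (hq0 : ∀ y, 0 ≤ q y) (hq1 : ∑ y, q y = 1) :
    ∃ K : α → α → ℝ, (∀ c y, 0 ≤ K c y) ∧ (∀ c, ∑ y, K c y = 1) ∧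
      (∀ y, ∑ c, a c * K c y = q y) ∧ ∑ c, a c * (1 - K c c) ≤ TV a q := by
  by_cases haq : a = q
  · subst haq
    refine ⟨fun c y => if c = y then 1 else 0, fun c y => by positivity, fun c => by simp,
      fun y => by simp, by simp [TV_nonneg]⟩
  have ht : 0 < TV a q := (TV_nonneg a q).lt_of_ne' (TV_eq_zero_iff.not.mpr haq)
  set β : α → ℝ := fun c => min 1 (q c / a c)
  set r : α → ℝ := fun y => (q y - min (a y) (q y)) / TV a q
  have hβ : ∀ c, a c * β c = min (a c) (q c) := fun c => mul_min_one_div (ha0 c) (hq0 c)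
  have hβ0 : ∀ c, 0 ≤ β c := fun c => le_min zero_le_one (div_nonneg (hq0 c) (ha0 c))
  have hβ1 : ∀ c, β c ≤ 1 := fun c => min_le_left _ _
  have hr0 : ∀ y, 0 ≤ r y := fun y => div_nonneg (sub_nonneg.2 (min_le_right _ _)) ht.le
  have hexcess : ∑ c, (a c - min (a c) (q c)) = TV a q := by
    rw [sum_sub_distrib, ha1, sum_min_eq_one_sub_TV ha1 hq1]; ring
  have hr1 : ∑ y, r y = 1 := by
    rw [← sum_div, sum_sub_distrib, hq1, sum_min_eq_one_sub_TV ha1 hq1, sub_sub_cancel,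
      div_self ht.ne']
  refine ⟨fun c y => (if c = y then β c else 0) + (1 - β c) * r y, fun c y => ?_, fun c => ?_,
    fun y => ?_, ?_⟩
  · have := hβ0 c
    have := mul_nonneg (sub_nonneg.2 (hβ1 c)) (hr0 y)
    dsimp only
    split_ifs <;> linarith
  · simp [sum_add_distrib, ← mul_sum, hr1]
  · have hmove : ∀ c, a c * (1 - β c) = a c - min (a c) (q c) := fun c => by
      rw [mul_one_sub, hβ]
    simp only [mul_add, mul_ite, mul_zero, sum_add_distrib, sum_ite_eq', mem_univ, if_true,
      ← mul_assoc, hmove, ← sum_mul, hexcess, hβ, r]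
    rw [mul_div_cancel₀ _ ht.ne']
    ring
  · calc ∑ c, a c * (1 - ((if c = c then β c else 0) + (1 - β c) * r c))
        ≤ ∑ c, (a c - min (a c) (q c)) := by
          gcongr with c
          have := mul_nonneg (mul_nonneg (ha0 c) (sub_nonneg.2 (hβ1 c))) (hr0 c)
          simp only [if_true]
          nlinarith [hβ c]
      _ = TV a q := hexcess

end Coupling

lemma sum_mul_TV_add_le_sum_mul_TV {ι α : Type*} [Fintype ι] [Fintype α] {w : ι → ℝ}
    (hw0 : ∀ i, 0 ≤ w i) (hw1 : ∑ i, w i = 1) (p : ι → α → ℝ) (ν : α → ℝ) (i₀ : ι) :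
    ∑ i, w i * TV (p i) (p i₀) + (2 * w i₀ - 1) * TV (p i₀) ν ≤ ∑ i, w i * TV (p i) ν := by
  set slack : ι → ℝ := fun i => w i * (TV (p i) ν + TV ν (p i₀) - TV (p i) (p i₀))
  have hslack : ∀ i, 0 ≤ slack i := fun i =>
    mul_nonneg (hw0 i) (sub_nonneg.2 (TV_triangle _ _ _))
  have hslack₀ : slack i₀ = 2 * w i₀ * TV (p i₀) ν := by
    simp only [slack, TV_self, TV_comm ν]; ring
  have hsum : ∑ i, slack i
      = ∑ i, w i * TV (p i) ν + TV (p i₀) ν - ∑ i, w i * TV (p i) (p i₀) := by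
    simp only [slack, mul_sub, mul_add, sum_sub_distrib, sum_add_distrib, ← sum_mul, hw1,
      one_mul, TV_comm ν]
  have := single_le_sum (fun i _ => hslack i) (mem_univ i₀)
  linarith

section Marginals

variable {X Y S : Type*} [Fintype X] [Fintype Y] {P : X → Y → S → ℝ}

lemma margS_nonneg (hP0 : ∀ x y s, 0 ≤ P x y s) (s : S) : 0 ≤ margS P s :=
  sum_nonneg fun x _ => sum_nonneg fun y _ => hP0 x y s

lemma sum_margS [Fintype S] (hP1 : ∑ x, ∑ y, ∑ s, P x y s = 1) : ∑ s, margS P s = 1 := by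
  simp only [margS]
  rw [← hP1, sum_comm]
  exact sum_congr rfl fun x _ => sum_comm

lemma margS_le_one [Fintype S] (hP0 : ∀ x y s, 0 ≤ P x y s)
    (hP1 : ∑ x, ∑ y, ∑ s, P x y s = 1) (s : S) : margS P s ≤ 1 :=
  sum_margS hP1 ▸ single_le_sum (fun s _ => margS_nonneg hP0 s) (mem_univ s)

lemma margS_mul_condYS {s : S} (hs : margS P s ≠ 0) (y : Y) :
    margS P s * condYS P s y = ∑ x, P x y s :=
  mul_div_cancel₀ _ hs

lemma condYS_nonneg (hP0 : ∀ x y s, 0 ≤ P x y s) (s : S) (y : Y) : 0 ≤ condYS P s y :=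
  div_nonneg (sum_nonneg fun x _ => hP0 x y s) (margS_nonneg hP0 s)

lemma sum_condYS {s : S} (hs : margS P s ≠ 0) : ∑ y, condYS P s y = 1 := by
  simp only [condYS]
  rw [← sum_div, sum_comm]
  exact div_self hs

variable {Q : X → S → Y → ℝ}

lemma margS_mul_condYhatS {s : S} (hs : margS P s ≠ 0) (yh : Y) :
    margS P s * condYhatS P Q s yh = jointYhatS P Q yh s :=
  mul_div_cancel₀ _ hs

lemma sum_condYhatS (hQ1 : ∀ x s, ∑ y, Q x s y = 1) {s : S} (hs : margS P s ≠ 0) :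
    ∑ yh, condYhatS P Q s yh = 1 := by
  have hjoint : ∑ yh, jointYhatS P Q yh s = margS P s := by
    simp only [jointYhatS, margS]
    rw [sum_comm]
    refine sum_congr rfl fun x _ => ?_
    rw [sum_comm]
    simp [← mul_sum, hQ1]
  simp only [condYhatS]
  rw [← sum_div, hjoint, div_self hs]

lemma jointYhatS_eq_of_reads_label {K : S → Y → Y → ℝ}
    (hQK : ∀ x y s yh, P x y s * Q x s yh = P x y s * K s y yh) {s : S} (hs : margS P s ≠ 0)
    (yh : Y) : jointYhatS P Q yh s = margS P s * ∑ y, condYS P s y * K s y yh := by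
  simp only [jointYhatS, hQK, mul_sum, ← mul_assoc, margS_mul_condYS hs, sum_mul]
  exact sum_comm

lemma DDP_eq_two_mul_sum_TV [Fintype S] :
    DDP P Q = 2 * ∑ s, TV (condYhatS P Q s) (margYhat P Q) := by
  simp only [DDP, TV, mul_sum, ← mul_assoc, mul_one_div_cancel (two_ne_zero (α := ℝ)), one_mul]
  exact sum_comm

lemma DDP_eq_zero_of_condYhatS_eq [Fintype S] (hP1 : ∑ x, ∑ y, ∑ s, P x y s = 1)
    (hS : ∀ s, 0 < margS P s) {q : Y → ℝ} (hq : ∀ s, condYhatS P Q s = q) : DDP P Q = 0 := by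
  have hmarg : margYhat P Q = q := funext fun yh => by
    simp only [margYhat, ← margS_mul_condYhatS (hS _).ne', hq, ← sum_mul, sum_margS hP1, one_mul]
  simp [DDP, hq, hmarg]

end Marginals

lemma sum_sum_mul_le_sum_min {X Y : Type*} [Fintype X] [Fintype Y] {p R : X → Y → ℝ}
    (hp : ∀ x y, 0 ≤ p x y) (hR0 : ∀ x y, 0 ≤ R x y) (hR1 : ∀ x, ∑ y, R x y = 1) :
    ∑ x, ∑ y, p x y * R x y ≤ ∑ y, min (∑ x, p x y) (∑ x, ∑ y', p x y' * R x y) := by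
  rw [sum_comm]
  gcongr with y
  refine le_min (sum_le_sum fun x _ => ?_) (sum_le_sum fun x _ => ?_)
  · exact mul_le_of_le_one_right (hp x y) (hR1 x ▸ single_le_sum (fun y _ => hR0 x y) (mem_univ y))
  · rw [← sum_mul]
    exact mul_le_mul_of_nonneg_right (single_le_sum (fun y _ => hp x y) (mem_univ y)) (hR0 x y)

section Risk

variable {X Y S : Type*} [Fintype X] [Fintype Y] [Fintype S] [DecidableEq Y]
  {P : X → Y → S → ℝ} {Q : X → S → Y → ℝ}

lemma risk_eq (hQ1 : ∀ x s, ∑ y, Q x s y = 1) :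
    risk P Q = ∑ s, ∑ x, ∑ y, P x y s * (1 - Q x s y) := by
  have hmiss : ∀ x y s, ∑ yh, P x y s * Q x s yh * (if yh = y then (0 : ℝ) else 1)
      = P x y s * (1 - Q x s y) := fun x y s => by
    have hind : ∀ yh, (if yh = y then (0 : ℝ) else 1) = 1 - if yh = y then 1 else 0 := fun yh => by
      split_ifs <;> norm_num
    simp only [hind, mul_sub, mul_one, mul_ite, mul_zero, sum_sub_distrib, sum_ite_eq', mem_univ,
      if_true, ← mul_sum, hQ1]
  simp only [risk, hmiss]
  exact (sum_congr rfl fun x _ => sum_comm).trans sum_comm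

theorem sum_margS_mul_TV_condYhatS_le_risk (hP0 : ∀ x y s, 0 ≤ P x y s)
    (hS : ∀ s, 0 < margS P s) (hQ : IsRule Q) :
    ∑ s, margS P s * TV (condYS P s) (condYhatS P Q s) ≤ risk P Q := by
  rw [risk_eq hQ.2]
  gcongr with s
  have hs := (hS s).ne'
  have hmatched := sum_sum_mul_le_sum_min (fun x y => hP0 x y s) (fun x y => hQ.1 x s y)
    (fun x => hQ.2 x s)
  have hoverlap : ∑ y, min (∑ x, P x y s) (jointYhatS P Q y s)
      = margS P s * (1 - TV (condYS P s) (condYhatS P Q s)) := by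
    simp only [← margS_mul_condYS hs, ← margS_mul_condYhatS hs,
      ← mul_min_of_nonneg _ _ (hS s).le, ← mul_sum]
    rw [sum_min_eq_one_sub_TV (sum_condYS hs) (sum_condYhatS hQ.2 hs)]
  have hmissed : ∑ x, ∑ y, P x y s * (1 - Q x s y)
      = margS P s - ∑ x, ∑ y, P x y s * Q x s y := by
    simp only [margS, mul_sub, mul_one, sum_sub_distrib]
  simp only [jointYhatS] at hoverlap
  linarith

theorem sum_margS_mul_TV_margYhat_le (hP0 : ∀ x y s, 0 ≤ P x y s)
    (hP1 : ∑ x, ∑ y, ∑ s, P x y s = 1) (hS : ∀ s, 0 < margS P s) (hQ : IsRule Q) :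
    ∑ s, margS P s * TV (condYS P s) (margYhat P Q) ≤ risk P Q + DDP P Q / 2 :=
  calc ∑ s, margS P s * TV (condYS P s) (margYhat P Q)
      ≤ ∑ s, (margS P s * TV (condYS P s) (condYhatS P Q s)
          + TV (condYhatS P Q s) (margYhat P Q)) := by
        gcongr with s
        calc margS P s * TV (condYS P s) (margYhat P Q)
            ≤ margS P s * (TV (condYS P s) (condYhatS P Q s)
                + TV (condYhatS P Q s) (margYhat P Q)) := by
              gcongr
              · exact margS_nonneg hP0 s
              · exact TV_triangle _ _ _
          _ ≤ _ := by
              rw [mul_add]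
              gcongr
              exact mul_le_of_le_one_left (TV_nonneg _ _) (margS_le_one hP0 hP1 s)
    _ ≤ risk P Q + DDP P Q / 2 := by
        rw [sum_add_distrib, DDP_eq_two_mul_sum_TV]
        linarith [sum_margS_mul_TV_condYhatS_le_risk hP0 hS hQ]

lemma risk_eq_of_reads_label {K : S → Y → Y → ℝ}
    (hQK : ∀ x y s yh, P x y s * Q x s yh = P x y s * K s y yh)
    (hQ1 : ∀ x s, ∑ y, Q x s y = 1) (hS : ∀ s, margS P s ≠ 0) :
    risk P Q = ∑ s, margS P s * ∑ y, condYS P s y * (1 - K s y y) := by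
  rw [risk_eq hQ1]
  refine sum_congr rfl fun s _ => ?_
  simp only [mul_sub, mul_one, hQK, mul_sum, ← mul_assoc, margS_mul_condYS (hS s), sum_mul,
    ← sum_sub_distrib]
  exact sum_comm

theorem exists_isRule_condYhatS_eq_of_deterministic (hP0 : ∀ x y s, 0 ≤ P x y s)
    (hS : ∀ s, 0 < margS P s) {h : X → S → Y} (hdet : ∀ x y s, y ≠ h x s → P x y s = 0)
    {q : Y → ℝ} (hq0 : ∀ y, 0 ≤ q y) (hq1 : ∑ y, q y = 1) :
    ∃ Q' : X → S → Y → ℝ, IsRule Q' ∧ (∀ s, condYhatS P Q' s = q) ∧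
      risk P Q' ≤ ∑ s, margS P s * TV (condYS P s) q := by
  choose K hK0 hK1 hKq hKdiag using fun s =>
    exists_maximal_coupling_kernel (condYS_nonneg hP0 s) (sum_condYS (hS s).ne') hq0 hq1
  have hreads : ∀ x y s yh, P x y s * K s (h x s) yh = P x y s * K s y yh := fun x y s yh => by
    by_cases hy : y = h x s
    · rw [hy]
    · rw [hdet x y s hy, zero_mul, zero_mul]
  refine ⟨fun x s => K s (h x s), ⟨fun x s => hK0 s _, fun x s => hK1 s _⟩,
    fun s => funext fun yh => ?_, ?_⟩
  · rw [condYhatS, jointYhatS_eq_of_reads_label hreads (hS s).ne', hKq,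
      mul_div_cancel_left₀ _ (hS s).ne']
  · rw [risk_eq_of_reads_label hreads (fun x s => hK1 s _) fun s => (hS s).ne']
    gcongr with s
    · exact (hS s).le
    · exact hKdiag s

end Risk

/-- **Theorem 1 (DDP case).** If `Y = h(X, S)` is deterministic, the majority sensitive
attribute satisfies `P_S(s_max) = 1/2 + δ` with `δ > 0`, and `Q` is an optimal randomized
prediction rule among those with `DDP(Ŷ, S) ≤ ε`, then for every `s`,
`TV(P_{Ŷ|S=s}, P_{Y|S=s_max}) ≤ (1/2 + 1/(4δ)) ε`. -/
theorem ddp_fair_optimal_inductive_bias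
    (P : 𝒳 → 𝒴 → 𝒮 → ℝ)
    (hP0 : ∀ x y s, 0 ≤ P x y s)
    (hP1 : ∑ x, ∑ y, ∑ s, P x y s = 1)
    (hS : ∀ s, 0 < margS P s)
    (h : 𝒳 → 𝒮 → 𝒴) (hdet : ∀ x y s, y ≠ h x s → P x y s = 0)
    (smax : 𝒮) (δ : ℝ) (hδ : 0 < δ) (hsmax : margS P smax = 1 / 2 + δ)
    (ε : ℝ)
    (Q : 𝒳 → 𝒮 → 𝒴 → ℝ) (hQ : IsRule Q)
    (hfair : DDP P Q ≤ ε)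
    (hopt : ∀ Q' : 𝒳 → 𝒮 → 𝒴 → ℝ, IsRule Q' → DDP P Q' ≤ ε → risk P Q ≤ risk P Q') :
    ∀ s, TV (condYhatS P Q s) (condYS P smax) ≤ (1 / 2 + 1 / (4 * δ)) * ε := by
  intro s
  set q := condYS P smax
  set ν := margYhat P Q
  have hparity : ∑ s, TV (condYhatS P Q s) ν ≤ ε / 2 := by
    rw [DDP_eq_two_mul_sum_TV] at hfair
    linarith
  have hε : 0 ≤ ε := by linarith [sum_nonneg fun s (_ : s ∈ univ) => TV_nonneg (condYhatS P Q s) ν]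
  obtain ⟨Q', hQ', hQ'q, hQ'risk⟩ := exists_isRule_condYhatS_eq_of_deterministic hP0 hS hdet
    (condYS_nonneg hP0 smax) (sum_condYS (hS smax).ne')
  have hopt' := hopt Q' hQ' (DDP_eq_zero_of_condYhatS_eq hP1 hS hQ'q ▸ hε)
  have hbary := sum_mul_TV_add_le_sum_mul_TV (fun s => (hS s).le) (sum_margS hP1) (condYS P) ν smax
  have hrisk := sum_margS_mul_TV_margYhat_le hP0 hP1 hS hQ
  have hqν : 2 * δ * TV q ν ≤ ε / 2 := by
    rw [hsmax, show 2 * (1 / 2 + δ) - 1 = 2 * δ by ring] at hbary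
    linarith
  calc TV (condYhatS P Q s) q ≤ TV (condYhatS P Q s) ν + TV ν q := TV_triangle _ _ _
    _ ≤ ε / 2 + ε / (4 * δ) := by
        gcongr
        · exact (single_le_sum (fun s _ => TV_nonneg _ ν) (mem_univ s)).trans hparity
        · rw [TV_comm, le_div_iff₀ (by positivity)]
          linarith
    _ = (1 / 2 + 1 / (4 * δ)) * ε := by ring
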